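/- arXiv:1612.05745 — 8 statements merged into one kernel-verified Lean document; each statement's English description precedes it below -/
import Mathlib

section
/- Let M be an R-module such that M_p is a free R_p-module for every prime ideal p (M is locally free). If p ⊆ q are prime ideals of R, then the rank of M_p over R_p equals the rank of M_q over R_q. -/
/-!
`R_q → R_p` is a localization, so `M_p ≅ R_p ⊗[R_q] M_q` is a base change of the free
`R_q`-module `M_q`, and base change along a map to a nontrivial ring preserves the rank of a
free module.
-/

open TensorProduct

section
variable {R M : Type*} [CommRing R] [AddCommGroup M] [Module R M]

theorem LocalizedModule.rank_eq_rank_of_le {S T : Submonoid R} (hST : S ≤ T)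
    [Module.Free (Localization S) (LocalizedModule S M)] [Nontrivial (Localization T)] :
    Module.rank (Localization T) (LocalizedModule T M) =
      Module.rank (Localization S) (LocalizedModule S M) := by
  let := IsLocalization.localizationAlgebraOfSubmonoidLe (Localization S) (Localization T) S T hST
  have := IsLocalization.localization_isScalarTower_of_submonoid_le
    (Localization S) (Localization T) S T hST
  have tensorEquiv (U : Submonoid R) :
      Localization U ⊗[R] M ≃ₗ[Localization U] LocalizedModule U M :=
    (IsLocalizedModule.isBaseChange U (Localization U) (LocalizedModule.mkLinearMap U M)).equiv
  calc Module.rank (Localization T) (LocalizedModule T M)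
      = Module.rank (Localization T) (Localization T ⊗[R] M) := (tensorEquiv T).rank_eq.symm
    _ = Module.rank (Localization T) (Localization T ⊗[Localization S] (Localization S ⊗[R] M)) :=
        (AlgebraTensorModule.cancelBaseChange R _ _ _ M).rank_eq.symm
    _ = Module.rank (Localization T) (Localization T ⊗[Localization S] LocalizedModule S M) :=
        (AlgebraTensorModule.congr (.refl _ _) (tensorEquiv S)).rank_eq
    _ = Module.rank (Localization S) (LocalizedModule S M) := by
        have := (algebraMap (Localization S) (Localization T)).domain_nontrivial
        rw [Module.rank_baseChange, Cardinal.lift_id']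

end

/-- If `M` is a locally free `R`-module (all localizations at primes are free) and `p ⊆ q`
are prime ideals, then the rank of `M_p` over `R_p` equals the rank of `M_q` over `R_q`. -/
theorem stmt3 {R M : Type*} [CommRing R] [AddCommGroup M] [Module R M]
    (hfree : ∀ (p : Ideal R) (_ : p.IsPrime),
      letI := ‹p.IsPrime›
      Module.Free (Localization.AtPrime p) (LocalizedModule p.primeCompl M))
    (p q : Ideal R) [hp : p.IsPrime] [hq : q.IsPrime] (hpq : p ≤ q) :
    Module.rank (Localization.AtPrime p) (LocalizedModule p.primeCompl M) =
      Module.rank (Localization.AtPrime q) (LocalizedModule q.primeCompl M) := by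
  have := hfree q hq
  exact LocalizedModule.rank_eq_rank_of_le fun _ hx hxp ↦ hx (hpq hxp)
end

section
/- If M is an R-module such that M_p is free over R_p for every prime p, then the support of M is stable under generalization: if p ⊆ q are primes and M_q ≠ 0, then M_p ≠ 0. -/
/-!
A basis vector `b = m / s` of the nonzero free `R_q`-module `M_q` is killed by no nonzero element
of `R_q`, so every `r ∈ R` with `r • m = 0` dies in `R_q`, i.e. `t * r = 0` for some `t ∉ q`.
For a prime `p ⊆ q` this forces `r ∈ p`; hence nothing outside `p` kills `m`, and `m / 1 ≠ 0`
in `M_p`.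
-/

open Module

lemma Module.Basis.annihilator_span_singleton_le_ker_algebraMap {R A N ι : Type*} [CommRing R]
    [CommRing A] [Algebra R A] [AddCommGroup N] [Module R N] [Module A N] [IsScalarTower R A N]
    (b : Basis ι A N) (i : ι) :
    (R ∙ b i).annihilator ≤ RingHom.ker (algebraMap R A) := by
  intro r hr
  rw [Submodule.mem_annihilator_span_singleton, ← algebraMap_smul A] at hr
  exact b.linearIndependent.smul_left_injective i (hr.trans (zero_smul A _).symm)

lemma IsLocalization.ker_algebraMap_le_of_disjoint {R A : Type*} [CommRing R] [CommRing A]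
    [Algebra R A] (S : Submonoid R) [IsLocalization S A] {p : Ideal R} [p.IsPrime]
    (hS : Disjoint (S : Set R) p) :
    RingHom.ker (algebraMap R A) ≤ p := by
  intro r hr
  obtain ⟨s, hs⟩ := (IsLocalization.map_eq_zero_iff S A r).mp hr
  exact (Ideal.IsPrime.mem_or_mem ‹_› (hs ▸ p.zero_mem)).resolve_left
    (Set.disjoint_left.mp hS s.2)

lemma LocalizedModule.annihilator_span_singleton_le_mk {R M : Type*} [CommRing R] [AddCommGroup M]
    [Module R M] (S : Submonoid R) (m : M) (s : S) :
    (R ∙ m).annihilator ≤ (R ∙ LocalizedModule.mk m s).annihilator := by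
  intro r hr
  rw [Submodule.mem_annihilator_span_singleton] at hr ⊢
  rw [LocalizedModule.smul'_mk, hr, LocalizedModule.zero_mk]

lemma LocalizedModule.exists_annihilator_span_singleton_le_ker_of_free {R M : Type*} [CommRing R]
    [AddCommGroup M] [Module R M] (S : Submonoid R) [Free (Localization S) (LocalizedModule S M)]
    [Nontrivial (LocalizedModule S M)] :
    ∃ m : M, (R ∙ m).annihilator ≤ RingHom.ker (algebraMap R (Localization S)) := by
  let b := Free.chooseBasis (Localization S) (LocalizedModule S M)
  obtain ⟨i⟩ := b.index_nonempty
  obtain ⟨m, s, hms⟩ : ∃ (m : M) (s : S), LocalizedModule.mk m s = b i :=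
    LocalizedModule.induction_on (fun m s ↦ ⟨m, s, rfl⟩) (b i)
  refine ⟨m, (LocalizedModule.annihilator_span_singleton_le_mk S m s).trans ?_⟩
  rw [hms]
  exact b.annihilator_span_singleton_le_ker_algebraMap i

/-- If `M` is a locally free `R`-module, then its support is stable under generalization:
if `p ⊆ q` are primes and `M_q ≠ 0`, then `M_p ≠ 0`. -/
theorem stmt5 {R M : Type*} [CommRing R] [AddCommGroup M] [Module R M]
    (hfree : ∀ (p : Ideal R) (_ : p.IsPrime),
      letI := ‹p.IsPrime›
      Module.Free (Localization.AtPrime p) (LocalizedModule p.primeCompl M))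
    (p q : Ideal R) [p.IsPrime] [q.IsPrime] (hpq : p ≤ q)
    (hq : Nontrivial (LocalizedModule q.primeCompl M)) :
    Nontrivial (LocalizedModule p.primeCompl M) := by
  have := hfree q ‹_›
  obtain ⟨m, hm⟩ :=
    LocalizedModule.exists_annihilator_span_singleton_le_ker_of_free (M := M) q.primeCompl
  have hker : RingHom.ker (algebraMap R (Localization.AtPrime q)) ≤ p :=
    IsLocalization.ker_algebraMap_le_of_disjoint q.primeCompl
      (Set.disjoint_left.mpr fun _ hxq hxp ↦ hxq (hpq hxp))
  exact Module.mem_support_iff_exists_annihilator (p := ⟨p, ‹_›⟩) |>.mpr ⟨m, hm.trans hker⟩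
end

section
/- Let M be a projective module over a commutative ring R and let {I_α} be a family of ideals of R. Then ⋂_α (I_α M) = (⋂_α I_α) M as submodules of M. -/
/-!
A projective module is a retract of a free module `σ →₀ R`, and for a section `s` of
`π : (σ →₀ R) → M` one has `I • M = s⁻¹ (I • (σ →₀ R))`, so it suffices to treat free modules,
where `I • (σ →₀ R)` consists of the vectors with all coordinates in `I`.
-/

namespace Finsupp

variable {R : Type*} [CommRing R] {σ ι : Type*}

lemma ideal_smul_top_eq_submodule (I : Ideal R) :
    (I • ⊤ : Submodule R (σ →₀ R)) = Finsupp.submodule fun _ ↦ I := by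
  rw [← submodule_top, ← submodule_smul, smul_eq_mul, Ideal.mul_top]

lemma iInf_submodule {S M : Type*} [Semiring S] [AddCommMonoid M] [Module S M]
    (p : ι → σ → Submodule S M) :
    ⨅ α, Finsupp.submodule (p α) = Finsupp.submodule fun i ↦ ⨅ α, p α i := by
  ext x
  simp only [Submodule.mem_iInf, mem_submodule_iff]
  exact forall_comm

lemma iInf_ideal_smul_top (I : ι → Ideal R) :
    ⨅ α, (I α • ⊤ : Submodule R (σ →₀ R)) = (⨅ α, I α) • ⊤ := by
  simp only [ideal_smul_top_eq_submodule, iInf_submodule]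

end Finsupp

lemma Submodule.comap_smul_top_of_leftInverse {R M N : Type*} [CommSemiring R]
    [AddCommMonoid M] [Module R M] [AddCommMonoid N] [Module R N] (I : Ideal R)
    {s : M →ₗ[R] N} {π : N →ₗ[R] M} (h : Function.LeftInverse π s) :
    comap s (I • ⊤) = I • ⊤ := by
  refine le_antisymm (fun x hx ↦ ?_) (smul_top_le_comap_smul_top I s)
  have hπ : π (s x) ∈ map π (I • ⊤) := mem_map_of_mem hx
  rw [h x, map_smul''] at hπ
  exact smul_mono_right I (le_top : map π ⊤ ≤ ⊤) hπ

/-- For a projective module `M` over a commutative ring `R` and a family of ideals `I α`,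
`⋂ α, (I α) M = (⋂ α, I α) M`. -/
theorem stmt6 {R M : Type*} [CommRing R] [AddCommGroup M] [Module R M]
    [Module.Projective R M] {ι : Type*} (I : ι → Ideal R) :
    (⨅ α, (I α • ⊤ : Submodule R M)) = (⨅ α, I α) • (⊤ : Submodule R M) := by
  obtain ⟨s, hs⟩ := Module.Projective.out (R := R) (P := M)
  have hretract (J : Ideal R) : Submodule.comap s (J • ⊤) = J • ⊤ :=
    Submodule.comap_smul_top_of_leftInverse J hs
  simp only [← hretract, ← Submodule.comap_iInf, Finsupp.iInf_ideal_smul_top]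
end

section
/- Let M be a projective module over a commutative ring R and let p be a prime ideal of R. Then M_p = 0 if and only if M = pM. -/
/-!
Choose a splitting `s : M → R^(M)` of `linearCombination : R^(M) → M`. Then `m ∈ I • M` exactly
when all coordinates of `s m` lie in `I`. If `r ∉ p` kills `m`, primality puts every coordinate
of `s m` in `p`, so `m ∈ pM`. Conversely, if `M = pM`, the identity `s m = ∑ₓ (s m)ₓ • s x` shows
that the ideal `J` generated by the coordinates of `s m` satisfies `J ≤ p • J`; Nakayama gives
`r ≡ 1 mod p` with `r J = 0`, hence `r • m = 0` with `r ∉ p`.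
-/

namespace Module.Projective

variable {R M : Type*} [CommRing R] [AddCommGroup M] [Module R M]

theorem mem_smul_top_iff_forall_apply_mem {s : M →ₗ[R] M →₀ R}
    (hs : Function.LeftInverse (Finsupp.linearCombination R id) s) (I : Ideal R) (m : M) :
    m ∈ I • (⊤ : Submodule R M) ↔ ∀ x, s m x ∈ I := by
  constructor
  · intro hm x
    refine Submodule.smul_induction_on hm (fun r hr n _ => ?_) fun a b ha hb => ?_
    · simpa using I.mul_mem_right (s n x) hr
    · simpa using I.add_mem ha hb
  · intro hcoord
    rw [← hs m, Finsupp.linearCombination_apply]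
    exact Submodule.finsuppSum_mem _ _ _ _ fun x _ =>
      Submodule.smul_mem_smul (hcoord x) Submodule.mem_top

theorem apply_eq_sum_mul_apply {s : M →ₗ[R] M →₀ R}
    (hs : Function.LeftInverse (Finsupp.linearCombination R id) s) (m y : M) :
    s m y = ∑ x ∈ (s m).support, s m x * s x y := by
  conv_lhs => rw [← hs m, Finsupp.linearCombination_apply, map_finsuppSum, Finsupp.sum_apply]
  simp [Finsupp.sum]

theorem mem_smul_top_of_smul_eq_zero [Module.Projective R M] {p : Ideal R} [p.IsPrime]
    {r : R} (hr : r ∉ p) {m : M} (hm : r • m = 0) : m ∈ p • (⊤ : Submodule R M) := by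
  obtain ⟨s, hs⟩ := Module.projective_def.mp ‹Module.Projective R M›
  refine (mem_smul_top_iff_forall_apply_mem hs p m).mpr fun x => ?_
  have hzero : r * s m x = 0 := by simpa using congr($(congrArg s hm) x)
  exact (Ideal.IsPrime.mem_or_mem ‹_› (hzero ▸ p.zero_mem)).resolve_left hr

theorem exists_sub_one_mem_and_smul_eq_zero_of_smul_top_eq_top [Module.Projective R M]
    {I : Ideal R} (hI : I • (⊤ : Submodule R M) = ⊤) (m : M) :
    ∃ r : R, r - 1 ∈ I ∧ r • m = 0 := by
  obtain ⟨s, hs⟩ := Module.projective_def.mp ‹Module.Projective R M›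
  set J : Ideal R := Ideal.span (Set.range (s m))
  have hcoord : ∀ x y, s x y ∈ I := fun x =>
    (mem_smul_top_iff_forall_apply_mem hs I x).mp (Submodule.eq_top_iff'.mp hI x)
  have hJ : J ≤ I • J := by
    refine Ideal.span_le.mpr ?_
    rintro _ ⟨y, rfl⟩
    rw [apply_eq_sum_mul_apply hs m y]
    refine Ideal.sum_mem _ fun x _ => ?_
    rw [mul_comm]
    exact Submodule.smul_mem_smul (hcoord x y) (Ideal.subset_span ⟨x, rfl⟩)
  obtain ⟨r, hr, hrJ⟩ := Submodule.exists_sub_one_mem_and_smul_eq_zero_of_fg_of_le_smul I J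
    (Submodule.fg_span (Finsupp.finite_range _)) hJ
  have hrs : r • s m = 0 := Finsupp.ext fun y => hrJ _ (Ideal.subset_span ⟨y, rfl⟩)
  refine ⟨r, hr, ?_⟩
  rw [← hs (r • m), map_smul, hrs, map_zero]

end Module.Projective

open Module.Projective in
/-- For a projective module `M` over a commutative ring `R` and a prime ideal `p`,
`M_p = 0` if and only if `M = pM`. -/
theorem stmt7 {R M : Type*} [CommRing R] [AddCommGroup M] [Module R M]
    [Module.Projective R M] (p : Ideal R) [p.IsPrime] :
    Subsingleton (LocalizedModule p.primeCompl M) ↔ (p • ⊤ : Submodule R M) = ⊤ := by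
  rw [LocalizedModule.subsingleton_iff]
  constructor
  · intro H
    refine eq_top_iff.mpr fun m _ => ?_
    obtain ⟨r, hr, hrm⟩ := H m
    exact mem_smul_top_of_smul_eq_zero hr hrm
  · intro H m
    obtain ⟨r, hr, hrm⟩ := exists_sub_one_mem_and_smul_eq_zero_of_smul_top_eq_top H m
    exact ⟨r, fun hrp => p.one_notMem ((p.sub_mem_iff_right hrp).mp hr), hrm⟩
end

section
/- Let M be a flat R-module such that M_p is finitely generated over R_p for every prime p, and let p be a prime ideal of R. Then M_p = 0 if and only if M = pM. -/
/-!
If `r ∉ p` kills `m`, then `r` is a nonzerodivisor on the domain `R ⧸ p`, hence by flatness on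
`M ⧸ pM ≅ R ⧸ p ⊗ M`, so `m ∈ pM`. Conversely, `pM = M` localizes to `M_p = 𝔪 M_p`, and Nakayama
applies since `M_p` is finitely generated over the local ring `R_p`.
-/

open Submodule

theorem Ideal.isSMulRegular_quotient_of_notMem {R : Type*} [CommRing R] {p : Ideal R}
    [p.IsPrime] {r : R} (hr : r ∉ p) : IsSMulRegular (R ⧸ p) r :=
  (isSMulRegular_algebraMap_iff (R ⧸ p)).mp <|
    IsSMulRegular.of_ne_zero (Ideal.Quotient.eq_zero_iff_mem.not.mpr hr)

theorem Module.Flat.isSMulRegular_quotient_smul_top {R M : Type*} [CommRing R] [AddCommGroup M]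
    [Module R M] [Module.Flat R M] {I : Ideal R} {r : R} (hr : IsSMulRegular (R ⧸ I) r) :
    IsSMulRegular (M ⧸ (I • ⊤ : Submodule R M)) r :=
  ((TensorProduct.quotTensorEquivQuotSMul M I).isSMulRegular_congr r).mp (hr.rTensor M)

theorem Module.Flat.smul_top_eq_top_of_subsingleton_localizedModule {R M : Type*} [CommRing R]
    [AddCommGroup M] [Module R M] [Module.Flat R M] (p : Ideal R) [p.IsPrime]
    [Subsingleton (LocalizedModule p.primeCompl M)] : (p • ⊤ : Submodule R M) = ⊤ := by
  refine eq_top_iff'.mpr fun m ↦ ?_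
  obtain ⟨r, hr, hrm⟩ := LocalizedModule.subsingleton_iff.mp ‹_› m
  rw [← Quotient.mk_eq_zero]
  refine isSMulRegular_quotient_smul_top (Ideal.isSMulRegular_quotient_of_notMem hr) ?_
  simp only [smul_zero, ← Quotient.mk_smul, hrm, Quotient.mk_zero]

theorem LocalizedModule.subsingleton_of_smul_top_eq_top {R M : Type*} [CommRing R]
    [AddCommGroup M] [Module R M] (p : Ideal R) [p.IsPrime]
    [Module.Finite (Localization.AtPrime p) (LocalizedModule p.primeCompl M)]
    (h : (p • ⊤ : Submodule R M) = ⊤) : Subsingleton (LocalizedModule p.primeCompl M) := by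
  have hmax : (⊤ : Submodule (Localization.AtPrime p) (LocalizedModule p.primeCompl M)) =
      IsLocalRing.maximalIdeal (Localization.AtPrime p) • ⊤ := by
    have := congr_arg (localized' (Localization.AtPrime p) p.primeCompl
      (LocalizedModule.mkLinearMap p.primeCompl M)) h
    rwa [localized'_smul, localized'_top, Ideal.localized'_eq_map,
      Localization.AtPrime.map_eq_maximalIdeal, eq_comm] at this
  by_contra hM
  rw [not_subsingleton_iff_nontrivial] at hM
  exact top_ne_ideal_smul_of_le_jacobson_annihilator (IsLocalRing.maximalIdeal_le_jacobson _) hmax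

/-- For a flat `R`-module `M` which is locally of finite type (every localization at a prime
is a finitely generated module), and a prime ideal `p`, `M_p = 0` iff `M = pM`. -/
theorem stmt8 {R M : Type*} [CommRing R] [AddCommGroup M] [Module R M]
    [Module.Flat R M]
    (hloc : ∀ (q : Ideal R) (_ : q.IsPrime),
      letI := ‹q.IsPrime›
      Module.Finite (Localization.AtPrime q) (LocalizedModule q.primeCompl M))
    (p : Ideal R) [p.IsPrime] :
    Subsingleton (LocalizedModule p.primeCompl M) ↔ (p • ⊤ : Submodule R M) = ⊤ := by
  have := hloc p ‹_›
  exact ⟨fun _ ↦ Module.Flat.smul_top_eq_top_of_subsingleton_localizedModule p,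
    LocalizedModule.subsingleton_of_smul_top_eq_top p⟩
end

section
/- The support of a projective module over a commutative ring is open in the Zariski topology on Spec R. -/
/-!
A projective module has a dual basis: a section `s` of `R^(M) → M`, so `m = ∑ y, s m y • y`.
If some functional takes a value outside `p` at `m`, then `m` survives in `Mₚ`. If instead all
coordinates `s x y` lie in `p`, the coordinate vector `v` of `m` on the finite support `S` of
`s m` satisfies `v = B v` for the matrix `B = (s x y)` over `S`, whose entries lie in `p`; hence
`det (1 - B) ≡ 1 mod p` kills `v`, and so `m`. The support is therefore the union of the basic
opens `D (f m)` over functionals `f`.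
-/

open Finsupp Matrix PrimeSpectrum

namespace Matrix

variable {n R : Type*} [Fintype n] [DecidableEq n] [CommRing R]

theorem det_smul_eq_zero_of_mulVec_eq_zero {A : Matrix n n R} {v : n → R} (h : A *ᵥ v = 0) :
    A.det • v = 0 := by
  rw [← one_mulVec v, ← smul_mulVec, ← adjugate_mul, ← mulVec_mulVec, h, mulVec_zero]

theorem det_one_sub_sub_one_mem {I : Ideal R} {B : Matrix n n R} (hB : ∀ i j, B i j ∈ I) :
    (1 - B).det - 1 ∈ I := by
  have hB' : B.map (Ideal.Quotient.mk I) = 0 := by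
    ext i j
    exact Ideal.Quotient.eq_zero_iff_mem.mpr (hB i j)
  rw [← Ideal.Quotient.eq, map_one, RingHom.map_det, map_sub, map_one, RingHom.mapMatrix_apply,
    hB', sub_zero, det_one]

end Matrix

theorem exists_sub_one_mem_and_smul_eq_zero_of_section_apply_mem {R M : Type*} [CommRing R]
    [AddCommGroup M] [Module R M] {s : M →ₗ[R] M →₀ R}
    (hs : Function.LeftInverse (linearCombination R id) s) {I : Ideal R}
    (hI : ∀ x y : M, s x y ∈ I) (m : M) : ∃ t : R, t - 1 ∈ I ∧ t • m = 0 := by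
  classical
  let S := (s m).support
  let B : Matrix S S R := fun y x => s x y
  let v : S → R := fun y => s m y
  have hm : m = ∑ x : S, v x • (x : M) := by
    conv_lhs => rw [← hs m]
    rw [linearCombination_apply, Finsupp.sum, ← Finset.sum_coe_sort]
    rfl
  have hv : B *ᵥ v = v := funext fun y => by
    simp only [mulVec, dotProduct, B, v]
    conv_rhs => rw [hm]
    simp [finsetSum_apply, mul_comm, v]
  refine ⟨(1 - B).det, det_one_sub_sub_one_mem fun y x => hI x y, ?_⟩
  have htv : (1 - B).det • v = 0 :=
    det_smul_eq_zero_of_mulVec_eq_zero (by rw [sub_mulVec, one_mulVec, hv, sub_self])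
  rw [hm, Finset.smul_sum]
  refine Finset.sum_eq_zero fun x _ => ?_
  rw [smul_smul, show (1 - B).det * v x = 0 from congrFun htv x, zero_smul]

namespace Module

variable {R M : Type*} [CommRing R] [AddCommGroup M] [Module R M]

theorem mem_support_of_apply_notMem {p : PrimeSpectrum R} (f : Dual R M) {m : M}
    (h : f m ∉ p.asIdeal) : p ∈ support R M := by
  refine mem_support_iff'.mpr ⟨m, fun r hr hrm => ?_⟩
  have : r * f m ∈ p.asIdeal := by
    rw [← smul_eq_mul, ← map_smul, hrm, map_zero]
    exact p.asIdeal.zero_mem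
  exact (p.isPrime.mem_or_mem this).elim hr h

theorem support_eq_iUnion_basicOpen_of_projective [Projective R M] :
    support R M = ⋃ (f : Dual R M) (m : M), (basicOpen (f m) : Set (PrimeSpectrum R)) := by
  ext p
  simp only [Set.mem_iUnion, SetLike.mem_coe, mem_basicOpen]
  refine ⟨fun hp => ?_, fun ⟨f, m, h⟩ => mem_support_of_apply_notMem f h⟩
  by_contra! hcoord
  obtain ⟨s, hs⟩ := projective_def.mp ‹Projective R M›
  refine notMem_support_iff'.mpr (fun m => ?_) hp
  obtain ⟨t, ht, htm⟩ := exists_sub_one_mem_and_smul_eq_zero_of_section_apply_mem hs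
    (fun x y => hcoord (lapply y ∘ₗ s) x) m
  exact ⟨t, fun htp => p.isPrime.one_notMem (by simpa using p.asIdeal.sub_mem htp ht), htm⟩

end Module

/-- The support of a projective module over a commutative ring is Zariski open in `Spec R`. -/
theorem stmt9 {R : Type*} (M : Type*) [CommRing R] [AddCommGroup M] [Module R M]
    [Module.Projective R M] :
    IsOpen (Module.support R M) := by
  rw [Module.support_eq_iUnion_basicOpen_of_projective]
  exact isOpen_iUnion fun f => isOpen_iUnion fun m => (basicOpen (f m)).isOpen
end

section
/- Let M be an R-module with M_p free over R_p for each prime p. Then for each natural number n, the support of the n-th exterior power Λⁿ(M) equals the set of primes p for which the rank of M_p over R_p is at least n. -/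
/-!
Everything is tested after localizing at `p`. If `M_p` has a basis with fewer than `n`
elements, lift them to `u₁, …, u_k ∈ M` with `k < n`; clearing denominators, any `n` vectors
of `M` become combinations of the `uᵢ` after multiplication by an element outside `p`, so their
wedge is killed by an element outside `p`. If `M_p` has rank at least `n`, then `⋀ⁿ M_p` is
free and nonzero, and the image of the `R`-linear map `⋀ⁿ M → ⋀ⁿ M_p` spans it, so some
`x` has nonzero image; since elements outside `p` act invertibly on `⋀ⁿ M_p`, none of them
kills `x`.
-/

open Submodule

namespace exteriorPower

variable {R M : Type*} [CommRing R] [AddCommGroup M] [Module R M]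

lemma ιMulti_eq_zero_of_mem_span {ι : Type*} [LinearOrder ι] [Finite ι] {n : ℕ}
    (hn : Nat.card ι < n) (u : ι → M) (v : Fin n → M)
    (hv : ∀ j, v j ∈ span R (Set.range u)) :
    ιMulti R n v = 0 := by
  have : IsEmpty (Set.powersetCard ι n) :=
    Set.isEmpty_coe_sort.mpr (Set.powersetCard.eq_empty_iff.mpr hn)
  have hmem : ιMulti R n v ∈ LinearMap.range (map n (span R (Set.range u)).subtype) :=
    ⟨ιMulti R n fun j => ⟨v j, hv j⟩, by rw [map_apply_ιMulti]; rfl⟩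
  rwa [ιMulti_family_span, Set.range_eq_empty, span_empty, mem_bot] at hmem

lemma nontrivial_of_basis {A N : Type*} [CommRing A] [Nontrivial A] [AddCommGroup N] [Module A N]
    {ι : Type*} (b : Module.Basis ι A N) {n : ℕ} (hn : (n : Cardinal) ≤ Cardinal.mk ι) :
    Nontrivial (⋀[A]^n N) := by
  let : LinearOrder ι := IsWellOrder.linearOrder WellOrderingRel
  obtain ⟨s, hs⟩ := Cardinal.exists_finset_eq_card hn
  let t : Set.powersetCard ι n := ⟨s, hs.symm⟩
  exact nontrivial_of_ne _ _ ((b.exteriorPower n).ne_zero t)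

variable (A : Type*) {N : Type*} [CommRing A] [Algebra R A] [AddCommGroup N] [Module A N]
  [Module R N] [IsScalarTower R A N] (n : ℕ)

noncomputable def mapOfIsScalarTower (f : M →ₗ[R] N) : ⋀[R]^n M →ₗ[R] ⋀[A]^n N :=
  alternatingMapLinearEquiv
    { toMultilinearMap :=
        ((ιMulti A n).toMultilinearMap.restrictScalars R).compLinearMap fun _ => f
      map_eq_zero_of_eq' := fun v _ _ h hij =>
        (ιMulti A n).map_eq_zero_of_eq (f ∘ v) (congrArg f h) hij }

variable {A n}

@[simp]
lemma mapOfIsScalarTower_ιMulti (f : M →ₗ[R] N) (v : Fin n → M) :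
    mapOfIsScalarTower A n f (ιMulti R n v) = ιMulti A n (f ∘ v) :=
  alternatingMapLinearEquiv_apply_ιMulti _ _

lemma span_range_mapOfIsScalarTower {f : M →ₗ[R] N} (hf : span A (Set.range f) = ⊤) :
    span A (Set.range (mapOfIsScalarTower A n f)) = ⊤ := by
  rw [eq_top_iff, ← ιMulti_span_of_span A n N hf, span_le]
  rintro - ⟨w, hw, rfl⟩
  choose v hv using Set.range_subset_iff.mp hw
  refine subset_span ⟨ιMulti R n v, ?_⟩
  rw [mapOfIsScalarTower_ιMulti]
  exact congrArg _ (funext hv)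

lemma exists_mapOfIsScalarTower_ne_zero [Nontrivial (⋀[A]^n N)] {f : M →ₗ[R] N}
    (hf : span A (Set.range f) = ⊤) : ∃ x, mapOfIsScalarTower A n f x ≠ 0 := by
  by_contra! h
  have hbot : span A (Set.range (mapOfIsScalarTower A n f)) = ⊥ := by
    rw [span_eq_bot]
    rintro - ⟨x, rfl⟩
    exact h x
  exact bot_ne_top (hbot.symm.trans (span_range_mapOfIsScalarTower hf))

end exteriorPower

namespace LocalizedModule

variable {R M : Type*} [CommRing R] [AddCommGroup M] [Module R M] {S : Submonoid R}

lemma exists_smul_mem_span {ι : Type*} {b : ι → LocalizedModule S M}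
    (hb : span (Localization S) (Set.range b) = ⊤) :
    ∃ u : ι → M, ∀ v : M, ∃ s ∈ S, s • v ∈ span R (Set.range u) := by
  choose w hw using fun i => IsLocalizedModule.mk'_surjective S (mkLinearMap S M) (b i)
  let N := span R (Set.range fun i => (w i).1)
  have htop : N.localized' (Localization S) S (mkLinearMap S M) = ⊤ := by
    rw [eq_top_iff, ← hb, span_le]
    rintro - ⟨i, rfl⟩
    exact ⟨(w i).1, subset_span ⟨i, rfl⟩, (w i).2, hw i⟩
  refine ⟨fun i => (w i).1, fun v => ?_⟩
  obtain ⟨m, hm, s, hms⟩ := (htop ▸ mem_top : mkLinearMap S M v ∈ _)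
  rw [← IsLocalizedModule.mk'_one S, IsLocalizedModule.mk'_eq_mk'_iff] at hms
  obtain ⟨c, hc⟩ := hms
  refine ⟨c * s, mul_mem c.2 s.2, ?_⟩
  rw [one_smul] at hc
  rw [mul_smul]
  exact hc ▸ N.smul_mem c hm

lemma subsingleton_exteriorPower {ι : Type*} {b : ι → LocalizedModule S M}
    (hb : span (Localization S) (Set.range b) = ⊤) {n : ℕ} (hn : Cardinal.mk ι < n) :
    Subsingleton (LocalizedModule S (⋀[R]^n M)) := by
  have : Finite ι := Cardinal.mk_lt_aleph0_iff.mp (hn.trans Cardinal.natCast_lt_aleph0)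
  let : LinearOrder ι := IsWellOrder.linearOrder WellOrderingRel
  obtain ⟨u, hu⟩ := exists_smul_mem_span hb
  rw [subsingleton_iff_ker_eq_top, eq_top_iff, ← exteriorPower.ιMulti_span, span_le]
  rintro - ⟨v, rfl⟩
  choose s hs hsv using fun j => hu (v j)
  refine mem_ker_mkLinearMap_iff.mpr ⟨∏ j, s j, prod_mem fun j _ => hs j, ?_⟩
  rw [← AlternatingMap.map_smul_univ]
  have hcard : Nat.card ι < n := by rwa [← Nat.cast_card, Nat.cast_lt] at hn
  exact exteriorPower.ιMulti_eq_zero_of_mem_span hcard u _ hsv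

variable (M S) in
lemma span_range_mkLinearMap :
    span (Localization S) (Set.range (mkLinearMap S M)) = ⊤ := by
  rw [← Set.image_univ]
  exact span_eq_top_of_isLocalizedModule _ S _ (span_univ (R := R) (M := M))

end LocalizedModule

lemma Module.mem_support_of_map_ne_zero {R X Y : Type*} [CommRing R] {p : PrimeSpectrum R}
    [AddCommGroup X] [Module R X] [AddCommGroup Y] [Module (Localization.AtPrime p.asIdeal) Y]
    [Module R Y] [IsScalarTower R (Localization.AtPrime p.asIdeal) Y] (g : X →ₗ[R] Y) {x : X}
    (hx : g x ≠ 0) : p ∈ Module.support R X := by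
  refine Module.mem_support_iff'.mpr ⟨x, fun r hr hrx => hx ?_⟩
  have hr : IsUnit (algebraMap R (Localization.AtPrime p.asIdeal) r) :=
    IsLocalization.map_units _ (⟨r, hr⟩ : p.asIdeal.primeCompl)
  rw [← hr.smul_eq_zero, algebraMap_smul, ← map_smul, hrx, map_zero]

/-- For a locally free `R`-module `M` and `n : ℕ`, the support of the `n`-th exterior power
`Λⁿ M` consists exactly of the primes `p` at which `M_p` has rank `≥ n`. -/
theorem stmt10 {R M : Type*} [CommRing R] [AddCommGroup M] [Module R M]
    (hfree : ∀ (p : Ideal R) (_ : p.IsPrime),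
      letI := ‹p.IsPrime›
      Module.Free (Localization.AtPrime p) (LocalizedModule p.primeCompl M))
    (n : ℕ) :
    Module.support R (⋀[R]^n M) =
      {p : PrimeSpectrum R |
        (n : Cardinal) ≤
          Module.rank (Localization.AtPrime p.asIdeal)
            (LocalizedModule p.asIdeal.primeCompl M)} := by
  ext p
  have := hfree p.asIdeal p.2
  let b := Module.Free.chooseBasis (Localization.AtPrime p.asIdeal)
    (LocalizedModule p.asIdeal.primeCompl M)
  rw [Set.mem_ofPred_eq, ← b.mk_eq_rank'']
  constructor
  · intro hp
    by_contra! hlt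
    exact Module.notMem_support_iff.mpr
      (LocalizedModule.subsingleton_exteriorPower b.span_eq hlt) hp
  · intro hn
    have := exteriorPower.nontrivial_of_basis b hn
    obtain ⟨x, hx⟩ := exteriorPower.exists_mapOfIsScalarTower_ne_zero (n := n)
      (LocalizedModule.span_range_mkLinearMap M p.asIdeal.primeCompl)
    exact Module.mem_support_of_map_ne_zero _ hx
end

section
/- If R is a commutative ring with only finitely many maximal ideals (semilocal), then every finitely generated flat R-module is projective. -/
/-!
Localized at a maximal ideal, a finitely generated flat module is free of finite rank, hence
finitely presented. Over a semilocal ring, a submodule whose localizations at all the (finitely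
many) maximal ideals are finitely generated is itself finitely generated; applied to the kernel
of a finite free presentation, this makes `M` finitely presented, and finitely presented flat
modules are projective.
-/

open Module

theorem Module.finitePresentation_localizedModule_of_flat {R M : Type*} [CommRing R]
    [AddCommGroup M] [Module R M] [Module.Finite R M] [Flat R M] (P : Ideal R) [P.IsPrime] :
    FinitePresentation (Localization.AtPrime P) (LocalizedModule P.primeCompl M) :=
  have : Free (Localization.AtPrime P) (LocalizedModule P.primeCompl M) :=
    free_of_flat_of_isLocalRing
  finitePresentation_of_projective _ _

theorem Module.finitePresentation_of_localized_maximal {R M : Type*} [CommRing R]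
    [Finite (MaximalSpectrum R)] [AddCommGroup M] [Module R M] [Module.Finite R M]
    (H : ∀ (P : Ideal R) [P.IsMaximal],
      FinitePresentation (Localization.AtPrime P) (LocalizedModule P.primeCompl M)) :
    FinitePresentation R M := by
  obtain ⟨n, π, hπ⟩ := Module.Finite.exists_fin' R M
  refine finitePresentation_of_surjective π hπ <| Submodule.fg_of_isLocalized_maximal
    (fun P _ ↦ Localization.AtPrime P) (fun P _ ↦ LocalizedModule P.primeCompl (Fin n → R))
    (fun P _ ↦ LocalizedModule.mkLinearMap P.primeCompl _) _ fun P _ ↦ ?_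
  rw [LinearMap.localized'_ker_eq_ker_localizedMap _ _ _
    (LocalizedModule.mkLinearMap P.primeCompl M)]
  exact FinitePresentation.fg_ker _ (IsLocalizedModule.map_surjective _ _ _ π hπ)

/-- Over a commutative ring with only finitely many maximal ideals, every finitely
generated flat module is projective. -/
theorem stmt12 {R M : Type*} [CommRing R] [AddCommGroup M] [Module R M]
    (hsemi : {I : Ideal R | I.IsMaximal}.Finite)
    [Module.Finite R M] [Module.Flat R M] :
    Module.Projective R M := by
  have : Finite (MaximalSpectrum R) :=
    @Finite.of_equiv _ _ hsemi.to_subtype (MaximalSpectrum.equivSubtype R).symm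
  have : FinitePresentation R M :=
    finitePresentation_of_localized_maximal fun P _ ↦ finitePresentation_localizedModule_of_flat P
  exact Flat.projective_of_finitePresentation
end
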